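/- Let 𝒜 = {A_0, A_1, …} be a collection of subsets of a commutative monoid, each containing 0, whose sumset is direct, and let ℬ ⊆ 𝒜. Then the sumset of the contraction (𝒜 ∖ ℬ) ∪ {⊕ℬ} is also direct, and it equals the sumset of 𝒜. In particular, if 𝒜 is an additive system (every element of the monoid has exactly one representation), then so is every contraction of 𝒜. -/

import Mathlib

/-- `a` is a representation of `n` in the collection `A`: each `a i ∈ A i`,
all but finitely many `a i` are zero, and `n = Σ_i a i`. -/
def IsRepr {M : Type*} [AddCommMonoid M] {ι : Type*} (A : ι → Set M) (n : M) (a : ι → M) :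
    Prop :=
  (∀ i, a i ∈ A i) ∧ (Function.support a).Finite ∧ n = ∑ᶠ i, a i

/-- The sumset of a collection: the set of elements admitting a representation. -/
def Sumset {M : Type*} [AddCommMonoid M] {ι : Type*} (A : ι → Set M) : Set M :=
  {n | ∃ a, IsRepr A n a}

/-- The sumset of a collection is direct when representations are unique. -/
def IsDirect {M : Type*} [AddCommMonoid M] {ι : Type*} (A : ι → Set M) : Prop :=
  ∀ n a a', IsRepr A n a → IsRepr A n a' → a = a'

/-- The contraction of the collection `A` with respect to the subcollection `{A i : i ∈ S}`:
the sets `A i` with `i ∈ S` are replaced by their (direct) sumset. -/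
def contraction {M : Type*} [AddCommMonoid M] (A : ℕ → Set M) (S : Set ℕ) :
    ({i : ℕ // i ∉ S} ⊕ Unit) → Set M :=
  Sum.elim (fun i => A i.1) (fun _ => Sumset (fun i : S => A i.1))


/-!
Contracting is regrouping the index set: after reindexing along `ℕ ≃ {i // i ∉ S} ⊕ S`, the
contraction only replaces the block `S` by the single set `Σ_{i ∈ S} A i`. A representation in
the contraction, together with a representation of its entry in that set, is a representation in
`A`, and every representation in `A` arises this way; uniqueness in `A` therefore forces
uniqueness in the contraction, and both collections represent the same elements.
-/

open Function Set

section Collections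

variable {M : Type*} [AddCommMonoid M]

section Finsum

variable {α β : Type*}

theorem finite_support_sumElim_iff {x : α → M} {y : β → M} :
    (support (Sum.elim x y)).Finite ↔ (support x).Finite ∧ (support y).Finite := by
  refine ⟨fun h => ⟨h.preimage Sum.inl_injective.injOn, h.preimage Sum.inr_injective.injOn⟩,
    fun ⟨hx, hy⟩ => ?_⟩
  refine ((hx.image Sum.inl).union (hy.image Sum.inr)).subset ?_
  rintro (i | j) h
  · exact Or.inl (mem_image_of_mem _ h)
  · exact Or.inr (mem_image_of_mem _ h)

theorem finsum_sumElim {x : α → M} {y : β → M} (hx : (support x).Finite)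
    (hy : (support y).Finite) :
    ∑ᶠ i, Sum.elim x y i = ∑ᶠ a, x a + ∑ᶠ b, y b := by
  have h := finite_support_sumElim_iff.2 ⟨hx, hy⟩
  rw [← finsum_mem_univ, ← range_inl_union_range_inr,
    finsum_mem_union' isCompl_range_inl_range_inr.disjoint (h.inter_of_right _)
      (h.inter_of_right _),
    finsum_mem_range Sum.inl_injective, finsum_mem_range Sum.inr_injective]
  rfl

end Finsum

section Reindex

variable {ι κ : Type*} {A : ι → Set M}

theorem isRepr_comp_equiv_iff (e : κ ≃ ι) {n : M} {b : κ → M} :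
    IsRepr (A ∘ e) n b ↔ IsRepr A n (b ∘ e.symm) := by
  have hfin : (e.symm ⁻¹' support b).Finite ↔ (support b).Finite :=
    ⟨fun h => h.of_preimage e.symm.surjective, fun h => h.preimage e.symm.injective.injOn⟩
  simp only [IsRepr, comp_apply, e.forall_congr_left, e.apply_symm_apply,
    support_comp_eq_preimage, hfin, finsum_comp_equiv e.symm]

theorem sumset_comp_equiv (e : κ ≃ ι) : Sumset (A ∘ e) = Sumset A := by
  ext n
  refine ⟨fun ⟨b, hb⟩ => ⟨_, (isRepr_comp_equiv_iff e).1 hb⟩,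
    fun ⟨a, ha⟩ => ⟨a ∘ e, ?_⟩⟩
  rwa [isRepr_comp_equiv_iff, comp_assoc, e.self_comp_symm, comp_id]

theorem IsDirect.comp_equiv (h : IsDirect A) (e : κ ≃ ι) : IsDirect (A ∘ e) :=
  fun n _ _ hb hb' => e.symm.surjective.injective_comp_right <|
    h n _ _ ((isRepr_comp_equiv_iff e).1 hb) ((isRepr_comp_equiv_iff e).1 hb')

end Reindex

section Contract

variable {α β : Type*} {A : α → Set M} {B : β → Set M}

theorem isRepr_sumElim_iff {n : M} {x : α → M} {y : β → M} :
    IsRepr (Sum.elim A B) n (Sum.elim x y) ↔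
      ∃ m k, IsRepr A m x ∧ IsRepr B k y ∧ n = m + k := by
  constructor
  · rintro ⟨hmem, hfin, hn⟩
    obtain ⟨hx, hy⟩ := finite_support_sumElim_iff.1 hfin
    exact ⟨_, _, ⟨fun i => hmem (.inl i), hx, rfl⟩, ⟨fun j => hmem (.inr j), hy, rfl⟩,
      hn.trans (finsum_sumElim hx hy)⟩
  · rintro ⟨m, k, ⟨hA, hx, rfl⟩, ⟨hB, hy, rfl⟩, rfl⟩
    exact ⟨Sum.forall.2 ⟨hA, hB⟩, finite_support_sumElim_iff.2 ⟨hx, hy⟩,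
      (finsum_sumElim hx hy).symm⟩

theorem isRepr_unit_iff {T : Set M} {n : M} {w : Unit → M} :
    IsRepr (fun _ : Unit => T) n w ↔ w () ∈ T ∧ n = w () := by
  simp only [IsRepr, Unique.forall_iff, toFinite, true_and, finsum_unique]

theorem IsRepr.expand_sumset {n : M} {z : α ⊕ Unit → M} {y : β → M}
    (hz : IsRepr (Sum.elim A fun _ : Unit => Sumset B) n z) (hy : IsRepr B (z (.inr ())) y) :
    IsRepr (Sum.elim A B) n (Sum.elim (z ∘ Sum.inl) y) := by
  rw [← Sum.elim_comp_inl_inr z, isRepr_sumElim_iff] at hz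
  obtain ⟨m, k, hx, hk, rfl⟩ := hz
  obtain ⟨-, rfl⟩ := isRepr_unit_iff.1 hk
  exact isRepr_sumElim_iff.2 ⟨m, _, hx, hy, rfl⟩

theorem sumset_sumElim_sumset :
    Sumset (Sum.elim A fun _ : Unit => Sumset B) = Sumset (Sum.elim A B) := by
  ext n
  constructor
  · rintro ⟨z, hz⟩
    obtain ⟨y, hy⟩ := hz.1 (.inr ())
    exact ⟨_, hz.expand_sumset hy⟩
  · rintro ⟨z, hz⟩
    rw [← Sum.elim_comp_inl_inr z, isRepr_sumElim_iff] at hz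
    obtain ⟨m, k, hx, hy, rfl⟩ := hz
    exact ⟨Sum.elim (z ∘ Sum.inl) fun _ => k,
      isRepr_sumElim_iff.2 ⟨m, k, hx, isRepr_unit_iff.2 ⟨⟨_, hy⟩, rfl⟩, rfl⟩⟩

theorem IsDirect.sumElim_sumset (h : IsDirect (Sum.elim A B)) :
    IsDirect (Sum.elim A fun _ : Unit => Sumset B) := by
  intro n z z' hz hz'
  obtain ⟨y, hy⟩ := hz.1 (.inr ())
  obtain ⟨y', hy'⟩ := hz'.1 (.inr ())
  obtain ⟨hx, rfl⟩ := Sum.elim_eq_iff.1 (h n _ _ (hz.expand_sumset hy) (hz'.expand_sumset hy'))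
  funext i
  rcases i with i | ⟨⟩
  · exact congrFun hx i
  · exact hy.2.2.trans hy'.2.2.symm

end Contract

end Collections

theorem contraction_isDirect_and_sumset_eq_general {M : Type*} [AddCommMonoid M]
    (A : ℕ → Set M) (S : Set ℕ)
    (hdir : IsDirect A) :
    IsDirect (contraction A S) ∧ Sumset (contraction A S) = Sumset A := by
  classical
  let e : {i // i ∉ S} ⊕ S ≃ ℕ := (Equiv.sumComm _ _).trans (Equiv.sumCompl (· ∈ S))
  have hsplit : A ∘ e = Sum.elim (fun i : {i // i ∉ S} => A i) fun i : S => A i := by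
    funext i
    rcases i with i | i <;> rfl
  refine ⟨IsDirect.sumElim_sumset (hsplit ▸ hdir.comp_equiv e), ?_⟩
  rw [contraction, sumset_sumElim_sumset, ← hsplit, sumset_comp_equiv]

/-- If the sumset of a collection (of subsets of a commutative monoid, each containing `0`)
is direct, then the sumset of any contraction is direct as well, and it coincides with the
sumset of the original collection.  In particular any contraction of an additive system is
again an additive system. -/
theorem contraction_isDirect_and_sumset_eq {M : Type*} [AddCommMonoid M]
    (A : ℕ → Set M) (S : Set ℕ)
    (h0 : ∀ i, 0 ∈ A i) (hdir : IsDirect A) :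
    IsDirect (contraction A S) ∧ Sumset (contraction A S) = Sumset A :=
  contraction_isDirect_and_sumset_eq_general A S hdir
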